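/- Let K be a commutative ring with unity, let v, w : ℤ → K, let α, β ∈ ℤ, and let s, r be natural numbers. Then the determinant of the (r+1)×(r+1) matrix with (i,j) entry c^V_{α-i,β-j}[s+i+j, s+j] (0 ≤ i, j ≤ r) equals ∏_{k=0}^{r} ∏_{t=0}^{k-1} v(α+s+k-1-t)·w(β-k+t), where the inner product for k = 0 is the empty product 1. -/
import Mathlib


open Finset Polynomial

variable {K : Type*} [CommRing K]

/-- Elementary symmetric function `e_t` of the entries of a list. -/
def esymmList : List K → ℕ → K
  | _, 0 => 1
  | [], _ + 1 => 0
  | a :: l, t + 1 => a * esymmList l t + esymmList l (t + 1)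

/-- Complete homogeneous symmetric function `h_t` of the entries of a list. -/
def hsymmList : List K → ℕ → K
  | _, 0 => 1
  | [], _ + 1 => 0
  | a :: l, t + 1 => a * hsymmList (a :: l) t + hsymmList l (t + 1)
  termination_by l t => (l.length, t)

/-- The V-Stirling number of the first kind
`c^V_{α,β}[n,k] = e_{n-k}(v(α+n-1)w(β), …, v(α)w(β+n-1))`,
set to `0` unless `0 ≤ k ≤ n`. -/
def cV (v w : ℤ → K) (α β n k : ℤ) : K :=
  if 0 ≤ k ∧ k ≤ n then
    esymmList (List.ofFn fun j : Fin n.toNat =>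
      v (α + n - 1 - (j : ℕ)) * w (β + (j : ℕ))) (n - k).toNat
  else 0

/-- The V-Stirling number of the second kind
`S^V_{α,β}[n,k] = h_{n-k}(v(α+k)w(β), …, v(α)w(β+k))`,
set to `0` unless `0 ≤ k ≤ n`. -/
def SV (v w : ℤ → K) (α β n k : ℤ) : K :=
  if 0 ≤ k ∧ k ≤ n then
    hsymmList (List.ofFn fun j : Fin (k.toNat + 1) =>
      v (α + k - (j : ℕ)) * w (β + (j : ℕ))) (n - k).toNat
  else 0

@[simp] lemma esymmList_zero (l : List K) : esymmList l 0 = 1 := by cases l <;> rfl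

@[simp] lemma esymmList_nil (t : ℕ) : esymmList ([] : List K) (t + 1) = 0 := rfl

lemma esymmList_cons (a : K) (l : List K) (t : ℕ) :
    esymmList (a :: l) (t + 1) = a * esymmList l t + esymmList l (t + 1) := rfl

lemma esymmList_eq_zero (l : List K) (t : ℕ) (h : l.length < t) : esymmList l t = 0 := by
  induction l generalizing t with
  | nil =>
    cases t with
    | zero => omega
    | succ t => rfl
  | cons a l ih =>
    cases t with
    | zero => omega
    | succ t =>
      rw [esymmList_cons, ih t (by simpa using h), ih (t + 1) (by simp at h; omega)]
      ring

lemma esymmList_length (l : List K) : esymmList l l.length = l.prod := by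
  induction l with
  | nil => simp
  | cons a l ih =>
    show esymmList (a :: l) (l.length + 1) = _
    rw [esymmList_cons, ih, esymmList_eq_zero l (l.length + 1) (by omega)]
    simp

lemma esymmList_append (l1 l2 : List K) (t : ℕ) :
    esymmList (l1 ++ l2) t =
      ∑ b ∈ Finset.range (t + 1), esymmList l1 b * esymmList l2 (t - b) := by
  induction l1 generalizing t with
  | nil =>
    rw [Finset.sum_eq_single 0]
    · simp
    · intro b _ hb
      cases b with
      | zero => omega
      | succ b => simp
    · simp
  | cons a l1 ih =>
    cases t with
    | zero => simp
    | succ t =>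
      rw [List.cons_append, esymmList_cons, ih, ih,
        Finset.sum_range_succ' (fun b => esymmList l1 b * esymmList l2 (t + 1 - b)) (t + 1),
        Finset.sum_range_succ' (fun b => esymmList (a :: l1) b * esymmList l2 (t + 1 - b)) (t + 1)]
      simp only [esymmList_cons, esymmList_zero, one_mul, Nat.succ_sub_succ, Nat.sub_zero]
      rw [Finset.mul_sum]
      rw [show (∑ x ∈ range (t + 1), (a * esymmList l1 x + esymmList l1 (x + 1)) * esymmList l2 (t - x))
          = ∑ x ∈ range (t + 1), (a * (esymmList l1 x * esymmList l2 (t - x)) + esymmList l1 (x + 1) * esymmList l2 (t - x)) from by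
        apply Finset.sum_congr rfl; intros; ring]
      rw [Finset.sum_add_distrib]
      ring

/-- The list `g a, g (a-1), …, g (a-len+1)`. -/
def yL (g : ℤ → K) (a : ℤ) (len : ℕ) : List K :=
  List.ofFn fun m : Fin len => g (a - (m : ℕ))

@[simp] lemma yL_length (g : ℤ → K) (a : ℤ) (len : ℕ) : (yL g a len).length = len := by
  simp [yL]

lemma yL_add (g : ℤ → K) (a : ℤ) (l1 l2 : ℕ) :
    yL g a (l1 + l2) = yL g a l1 ++ yL g (a - l1) l2 := by
  unfold yL
  rw [List.ofFn_add]
  refine congrArg _ (congrArg List.ofFn (funext fun m => ?_))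
  show g (a - (Fin.natAdd l1 m : ℕ)) = g (a - l1 - (m : ℕ))
  congr 1
  simp only [Fin.natAdd, Fin.val_mk]
  push_cast
  ring

lemma yL_prod (g : ℤ → K) (a : ℤ) (len : ℕ) :
    (yL g a len).prod = ∏ m ∈ Finset.range len, g (a - (m : ℕ)) := by
  rw [yL, List.prod_ofFn]
  exact Fin.prod_univ_eq_prod_range (fun m => g (a - (m : ℕ))) len

lemma cV_entry_eq (v w : ℤ → K) (α β : ℤ) (s i j : ℕ) :
    cV v w (α - (i : ℕ)) (β - (j : ℕ)) ((s : ℕ) + (i : ℕ) + (j : ℕ)) ((s : ℕ) + (j : ℕ)) =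
      esymmList (yL (fun p => v (α + p) * w (β + (s : ℤ) - 1 - p)) ((s : ℤ) + j - 1) (s + j + i)) i := by
  rw [cV, if_pos ⟨by positivity, by omega⟩]
  have h2 : ((s : ℤ) + i + j - ((s : ℤ) + j)).toNat = i := by omega
  rw [h2]
  congr 1
  apply List.ext_getElem
  · simp; omega
  · intro m hm1 hm2
    simp only [List.getElem_ofFn, yL]
    congr 1
    · congr 1; ring
    · congr 1; ring

/-- Lower-triangular factor. -/
def AfM (g : ℤ → K) (i b : ℕ) : K :=
  if b ≤ i then esymmList (yL g (-1) i) (i - b) else 0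

/-- Middle factor. -/
def NfM (g : ℤ → K) (s b j : ℕ) : K :=
  esymmList (yL g ((s : ℤ) + j - 1) (s + j)) b

/-- Lower-triangular factor. -/
def CfM (g : ℤ → K) (s b c : ℕ) : K :=
  if c ≤ b then esymmList (yL g ((s : ℤ) - 1) s) (b - c) else 0

/-- Upper-triangular factor. -/
def DfM (g : ℤ → K) (s c j : ℕ) : K :=
  esymmList (yL g ((s : ℤ) + j - 1) j) c

lemma N_eq_CD (g : ℤ → K) (s r : ℕ) (b j : Fin (r + 1)) :
    NfM g s b j = ∑ c : Fin (r + 1), CfM g s b c * DfM g s c j := by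
  rw [NfM, show s + (j : ℕ) = (j : ℕ) + s from Nat.add_comm _ _, yL_add,
    show ((s : ℤ) + (j : ℕ) - 1 - ((j : ℕ) : ℤ)) = (s : ℤ) - 1 by ring,
    esymmList_append,
    Fin.sum_univ_eq_sum_range (fun c => CfM g s b c * DfM g s c j) (r + 1)]
  calc ∑ c ∈ Finset.range ((b : ℕ) + 1),
        esymmList (yL g ((s : ℤ) + (j : ℕ) - 1) (j : ℕ)) c *
          esymmList (yL g ((s : ℤ) - 1) s) ((b : ℕ) - c)
      = ∑ c ∈ Finset.range ((b : ℕ) + 1), CfM g s b c * DfM g s c j := by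
        refine Finset.sum_congr rfl fun c hc => ?_
        rw [Finset.mem_range] at hc
        rw [CfM, DfM, if_pos (by omega)]
        ring
    _ = ∑ c ∈ Finset.range (r + 1), CfM g s b c * DfM g s c j := by
        refine Finset.sum_subset (Finset.range_subset_range.2 (by omega)) fun c _ hc => ?_
        rw [Finset.mem_range] at hc
        rw [CfM, if_neg (by omega), zero_mul]

theorem cV_det (v w : ℤ → K) (α β : ℤ) (s r : ℕ) :
    Matrix.det (Matrix.of fun i j : Fin (r + 1) =>
        cV v w (α - (i : ℕ)) (β - (j : ℕ)) ((s : ℕ) + (i : ℕ) + (j : ℕ)) ((s : ℕ) + (j : ℕ))) =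
      ∏ k ∈ Finset.range (r + 1), ∏ t ∈ Finset.range k,
        v (α + (s : ℕ) + (k : ℕ) - 1 - (t : ℕ)) * w (β - (k : ℕ) + (t : ℕ)) := by
  set g : ℤ → K := fun p => v (α + p) * w (β + (s : ℤ) - 1 - p) with hg
  have hMAN : (Matrix.of fun i j : Fin (r + 1) =>
        cV v w (α - (i : ℕ)) (β - (j : ℕ)) ((s : ℕ) + (i : ℕ) + (j : ℕ)) ((s : ℕ) + (j : ℕ))) =
      (Matrix.of fun i b : Fin (r + 1) => AfM g (i : ℕ) (b : ℕ)) *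
        (Matrix.of fun b j : Fin (r + 1) => NfM g s (b : ℕ) (j : ℕ)) := by
    ext i j
    rw [Matrix.mul_apply]
    simp only [Matrix.of_apply]
    rw [cV_entry_eq v w α β s i j, yL_add,
      show ((s : ℤ) + (j : ℕ) - 1 - ((s + (j : ℕ) : ℕ) : ℤ)) = -1 by push_cast; ring,
      esymmList_append,
      Fin.sum_univ_eq_sum_range (fun b => AfM g (i : ℕ) b * NfM g s b (j : ℕ)) (r + 1)]
    calc ∑ b ∈ Finset.range ((i : ℕ) + 1),
          esymmList (yL g ((s : ℤ) + (j : ℕ) - 1) (s + (j : ℕ))) b *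
            esymmList (yL g (-1) (i : ℕ)) ((i : ℕ) - b)
        = ∑ b ∈ Finset.range ((i : ℕ) + 1), AfM g (i : ℕ) b * NfM g s b (j : ℕ) := by
          refine Finset.sum_congr rfl fun b hb => ?_
          rw [Finset.mem_range] at hb
          rw [AfM, NfM, if_pos (by omega)]
          ring
      _ = ∑ b ∈ Finset.range (r + 1), AfM g (i : ℕ) b * NfM g s b (j : ℕ) := by
          refine Finset.sum_subset (Finset.range_subset_range.2 (by omega)) fun b _ hb => ?_
          rw [Finset.mem_range] at hb
          rw [AfM, if_neg (by omega), zero_mul]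
  have hNCD : (Matrix.of fun b j : Fin (r + 1) => NfM g s (b : ℕ) (j : ℕ)) =
      (Matrix.of fun b c : Fin (r + 1) => CfM g s (b : ℕ) (c : ℕ)) *
        (Matrix.of fun c j : Fin (r + 1) => DfM g s (c : ℕ) (j : ℕ)) := by
    ext b j
    rw [Matrix.mul_apply]
    simp only [Matrix.of_apply]
    exact N_eq_CD g s r b j
  rw [hMAN, hNCD, Matrix.det_mul, Matrix.det_mul]
  have hdetA : (Matrix.of fun i b : Fin (r + 1) => AfM g (i : ℕ) (b : ℕ)).det = 1 := by
    rw [Matrix.det_of_lowerTriangular _ (fun i j hij => by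
      have h : i < j := OrderDual.toDual_lt_toDual.mp hij
      rw [Fin.lt_def] at h
      rw [Matrix.of_apply, AfM, if_neg (by omega)])]
    refine Finset.prod_eq_one fun i _ => ?_
    rw [Matrix.of_apply, AfM, if_pos le_rfl, Nat.sub_self, esymmList_zero]
  have hdetC : (Matrix.of fun b c : Fin (r + 1) => CfM g s (b : ℕ) (c : ℕ)).det = 1 := by
    rw [Matrix.det_of_lowerTriangular _ (fun i j hij => by
      have h : i < j := OrderDual.toDual_lt_toDual.mp hij
      rw [Fin.lt_def] at h
      rw [Matrix.of_apply, CfM, if_neg (by omega)])]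
    refine Finset.prod_eq_one fun i _ => ?_
    rw [Matrix.of_apply, CfM, if_pos le_rfl, Nat.sub_self, esymmList_zero]
  have hdetD : (Matrix.of fun c j : Fin (r + 1) => DfM g s (c : ℕ) (j : ℕ)).det =
      ∏ k ∈ Finset.range (r + 1), ∏ t ∈ Finset.range k, g ((s : ℤ) + k - 1 - t) := by
    rw [Matrix.det_of_upperTriangular (fun i j hij => by
      rw [Matrix.of_apply, DfM]
      exact esymmList_eq_zero _ _ (by rw [yL_length]; exact hij))]
    show (∏ i : Fin (r + 1), DfM g s (i : ℕ) (i : ℕ)) = _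
    rw [Fin.prod_univ_eq_prod_range (fun k => DfM g s k k) (r + 1)]
    refine Finset.prod_congr rfl fun k _ => ?_
    rw [DfM]
    have hl := esymmList_length (yL g ((s : ℤ) + k - 1) k)
    rw [yL_length] at hl
    rw [hl, yL_prod]
  rw [hdetA, hdetC, hdetD, one_mul, one_mul]
  refine Finset.prod_congr rfl fun k _ => Finset.prod_congr rfl fun t _ => ?_
  show v (α + ((s : ℤ) + k - 1 - t)) * w (β + (s : ℤ) - 1 - ((s : ℤ) + k - 1 - t)) = _
  congr 1
  · congr 1; ring
  · congr 1; ring
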